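/- For any two timing functions γ and σ of length n, there exists exactly one stable, co-operative, reverse chronological sequence of mixed moves aligning γ to σ; its stamp components are determined by the recursion s_n = 0 and, for i = n−1 down to 1, r_{i+1} = e_{i+1} − s_{i+1} and s_i = 0 if e_i·r_{i+1} ≥ 0, s_i = e_i if e_i·r_{i+1} < 0 and |e_i| < |r_{i+1}|, s_i = −r_{i+1} otherwise, and its delay components are d_i = e_i − s_i + s_{i−1} (with s_0 = 0). -/
import Mathlib


open Finset

namespace TimedAlign

variable {n : ℕ}

/-- The stamp move `stamp(γ, x, i)`: shift the timestamp at position `i` by `x`. -/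
def stamp (γ : Fin n → ℝ) (x : ℝ) (i : Fin n) : Fin n → ℝ :=
  fun j => if j = i then γ j + x else γ j

/-- The delay move `delay(γ, x, i)`: shift all timestamps at positions `≥ i` by `x`. -/
def delay (γ : Fin n → ℝ) (x : ℝ) (i : Fin n) : Fin n → ℝ :=
  fun j => if i ≤ j then γ j + x else γ j

/-- The mixed move `(s, d, i)`: a delay move followed by a stamp move at the same position. -/
def mixed (s d : ℝ) (i : Fin n) (γ : Fin n → ℝ) : Fin n → ℝ :=
  stamp (delay γ d i) s i

/-- The timestamp preceding position `i` (with the convention `τ(0) = 0`). -/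
def prev (τ : Fin n → ℝ) (i : Fin n) : ℝ :=
  if (i : ℕ) = 0 then 0
  else τ ⟨(i : ℕ) - 1, lt_of_le_of_lt (Nat.sub_le _ _) i.isLt⟩

/-- The flow function of a timing function: `f_τ(1) = τ(1)`, `f_τ(i) = τ(i) - τ(i-1)`. -/
def flow (τ : Fin n → ℝ) (i : Fin n) : ℝ := τ i - prev τ i

/-- Elementary moves: stamp moves and delay moves. -/
inductive Move (n : ℕ) where
  | stampM (x : ℝ) (i : Fin n)
  | delayM (x : ℝ) (i : Fin n)

def Move.apply : Move n → (Fin n → ℝ) → (Fin n → ℝ)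
  | .stampM x i, γ => stamp γ x i
  | .delayM x i, γ => delay γ x i

def Move.cost : Move n → ℝ
  | .stampM x _ => |x|
  | .delayM x _ => |x|

/-- Apply a sequence of moves `m₁ m₂ ⋯ m_k`, with `m₁` first. -/
def applySeq (ms : List (Move n)) (γ : Fin n → ℝ) : Fin n → ℝ :=
  ms.foldl (fun τ m => m.apply τ) γ

/-- The cost of a sequence of moves is the sum of the costs of its moves. -/
def seqCost (ms : List (Move n)) : ℝ := (ms.map Move.cost).sum

/-- The mixed-moves distance `d_N`: the minimum cost over all finite sequences of
stamp and delay moves aligning `τ₁` to `τ₂`. -/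
noncomputable def dN (τ₁ τ₂ : Fin n → ℝ) : ℝ :=
  sInf {c : ℝ | ∃ ms : List (Move n), applySeq ms τ₁ = τ₂ ∧ seqCost ms = c}

/-- Apply the chronological sequence of mixed moves `(s₁,d₁,1)(s₂,d₂,2)⋯(s_n,d_n,n)`,
in increasing order of positions. -/
def chronApply (s d : Fin n → ℝ) (γ : Fin n → ℝ) : Fin n → ℝ :=
  (List.finRange n).foldl (fun τ i => mixed (s i) (d i) i τ) γ

/-- Apply the reverse chronological sequence `(s_n,d_n,n)⋯(s₁,d₁,1)`,
in decreasing order of positions. -/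
def revChronApply (s d : Fin n → ℝ) (γ : Fin n → ℝ) : Fin n → ℝ :=
  (List.finRange n).reverse.foldl (fun τ i => mixed (s i) (d i) i τ) γ

/-- The cost of a (reverse) chronological sequence of mixed moves. -/
def chronCost (s d : Fin n → ℝ) : ℝ := ∑ i, (|s i| + |d i|)

/-- A sequence of mixed moves is co-operative if each move has `s·d ≥ 0`. -/
def Cooperative (s d : Fin n → ℝ) : Prop := ∀ i, 0 ≤ s i * d i

/-- The move at the last position is a pure delay (`s_n = 0`). -/
def LastStampZero (s : Fin n → ℝ) : Prop := ∀ i : Fin n, (i : ℕ) + 1 = n → s i = 0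

/-- Cross co-operation: `s_i · d_{i+1} ≤ 0` for all `i < n`. -/
def CrossCooperative (s d : Fin n → ℝ) : Prop :=
  ∀ i : Fin n, ∀ h : (i : ℕ) + 1 < n, s i * d ⟨(i : ℕ) + 1, h⟩ ≤ 0

/-- The stable choice of stamp given error `e` at the current position and
residual `r` at the next position. -/
noncomputable def stableStamp (e r : ℝ) : ℝ :=
  if 0 ≤ e * r then 0 else if |e| < |r| then e else -r

/-- Stability of the stamp components of a reverse chronological co-operative run
aligning `γ` to `σ`: writing `e_i = f_σ(i) - f_γ(i)` and `r_{i+1} = e_{i+1} - s_{i+1}`,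
`s_i = 0` if `e_i·r_{i+1} ≥ 0`, `s_i = e_i` if moreover `|e_i| < |r_{i+1}|`,
and `s_i = -r_{i+1}` otherwise. -/
def Stable (γ σ s : Fin n → ℝ) : Prop :=
  ∀ i : Fin n, ∀ h : (i : ℕ) + 1 < n,
    s i = stableStamp (flow σ i - flow γ i)
      ((flow σ ⟨(i : ℕ) + 1, h⟩ - flow γ ⟨(i : ℕ) + 1, h⟩) - s ⟨(i : ℕ) + 1, h⟩)

/-- `s_{i-1}`, with the convention `s₀ = 0`. -/
def sprev (s : Fin n → ℝ) (i : Fin n) : ℝ :=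
  if (i : ℕ) = 0 then 0
  else s ⟨(i : ℕ) - 1, lt_of_le_of_lt (Nat.sub_le _ _) i.isLt⟩

-- auxiliary
lemma stableStamp_residual (e r : ℝ) : 0 ≤ stableStamp e r * (e - stableStamp e r) := by
  unfold stableStamp
  split_ifs with h1 h2
  · simp
  · simp
  · push_neg at h1 h2
    nlinarith [abs_mul e r, abs_mul_abs_self r, abs_nonneg r,
      abs_of_neg (show e * r < 0 by linarith)]

lemma stableStamp_coop (e' r x : ℝ) (hx : 0 ≤ x * r) : 0 ≤ x * (r + stableStamp e' r) := by
  unfold stableStamp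
  split_ifs with h1 h2
  · simpa using hx
  · push_neg at h1
    rcases lt_trichotomy r 0 with hr | hr | hr
    · have he : 0 < e' := by nlinarith
      rw [abs_of_pos he, abs_of_neg hr] at h2
      have hxn : x ≤ 0 := by nlinarith
      nlinarith
    · simp [hr] at h1
    · have he : e' < 0 := by nlinarith
      rw [abs_of_neg he, abs_of_pos hr] at h2
      have hxp : 0 ≤ x := by nlinarith
      nlinarith
  · simp

lemma mixed_apply (s d : ℝ) (i j : Fin n) (γ : Fin n → ℝ) :
    mixed s d i γ j = γ j + ((if i ≤ j then d else 0) + (if j = i then s else 0)) := by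
  unfold mixed stamp delay
  by_cases h1 : j = i
  · subst h1; simp; ring
  · simp only [h1, if_false]
    split_ifs <;> ring

lemma foldl_mixed (s d : Fin n → ℝ) (L : List (Fin n)) (γ : Fin n → ℝ) (j : Fin n) :
    (L.foldl (fun τ i => mixed (s i) (d i) i τ) γ) j
      = γ j + (L.map (fun i => (if i ≤ j then d i else 0) + (if j = i then s i else 0))).sum := by
  induction L generalizing γ with
  | nil => simp
  | cons a L ih =>
      simp only [List.foldl_cons, List.map_cons, List.sum_cons, ih, mixed_apply]
      ring

lemma revChronApply_eq (s d γ : Fin n → ℝ) (j : Fin n) :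
    revChronApply s d γ j = γ j + (∑ i, if i ≤ j then d i else 0) + s j := by
  rw [revChronApply, foldl_mixed, List.map_reverse, List.sum_reverse, ← Fin.sum_univ_def,
    Finset.sum_add_distrib, Finset.sum_ite_eq]
  simp
  ring

def natify (f : Fin n → ℝ) (k : ℕ) : ℝ := if h : k < n then f ⟨k, h⟩ else 0

lemma natify_pos (f : Fin n → ℝ) (k : ℕ) (h : k < n) : natify f k = f ⟨k, h⟩ := dif_pos h

lemma sum_le_eq (d : Fin n → ℝ) (j : Fin n) :
    (∑ i, if i ≤ j then d i else 0) = ∑ k ∈ range ((j : ℕ) + 1), natify d k := by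
  have h1 : (∑ i : Fin n, if i ≤ j then d i else 0)
      = ∑ k ∈ range n, (if k ≤ (j : ℕ) then natify d k else 0) := by
    rw [← Fin.sum_univ_eq_sum_range (fun k => if k ≤ (j : ℕ) then natify d k else 0) n]
    refine Finset.sum_congr rfl fun i _ => ?_
    have hd : natify d (i : ℕ) = d i := by rw [natify_pos d _ i.isLt]
    by_cases hc : i ≤ j
    · rw [if_pos hc, if_pos (show (i : ℕ) ≤ (j : ℕ) from hc), hd]
    · rw [if_neg hc, if_neg (show ¬ (i : ℕ) ≤ (j : ℕ) from fun h => hc h)]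
  rw [h1, ← Finset.sum_filter]
  congr 1
  ext k
  simp only [mem_filter, mem_range]
  have := j.isLt
  omega

lemma tele (f g : ℕ → ℝ) (n : ℕ) :
    (∀ j < n, ∑ k ∈ range (j + 1), f k = g j) ↔
    (∀ j < n, f j = g j - (if j = 0 then 0 else g (j - 1))) := by
  constructor
  · intro h j hj
    match j with
    | 0 =>
        have := h 0 hj
        simp [Finset.sum_range_one] at this
        simp [this]
    | (m + 1) =>
        have h1 := h (m + 1) hj
        have h2 := h m (by omega)
        rw [Finset.sum_range_succ, h2] at h1
        simp
        linarith
  · intro h j hj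
    induction j with
    | zero =>
        have := h 0 hj
        simp at this
        simp [Finset.sum_range_one, this]
    | succ m ih =>
        rw [Finset.sum_range_succ, ih (by omega)]
        have := h (m + 1) hj
        simp at this
        linarith

lemma align_iff (γ σ s d : Fin n → ℝ) :
    revChronApply s d γ = σ ↔
      ∀ i : Fin n, d i = (flow σ i - flow γ i) - s i + sprev s i := by
  have h1 : revChronApply s d γ = σ ↔
      ∀ j < n, ∑ k ∈ range (j + 1), natify d k = natify (fun i => σ i - γ i - s i) j := by
    rw [funext_iff]
    constructor
    · intro h j hj
      have hh := h ⟨j, hj⟩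
      rw [revChronApply_eq, sum_le_eq] at hh
      rw [natify_pos _ j hj]
      linarith
    · intro h j
      have hh := h (j : ℕ) j.isLt
      rw [natify_pos _ _ j.isLt, Fin.eta] at hh
      rw [revChronApply_eq, sum_le_eq]
      linarith
  rw [h1, tele]
  constructor
  · intro h i
    have hh := h (i : ℕ) i.isLt
    rw [natify_pos _ _ i.isLt, natify_pos _ _ i.isLt, Fin.eta] at hh
    rw [flow, flow, prev, prev, sprev]
    by_cases h0 : (i : ℕ) = 0
    · rw [if_pos h0] at hh
      rw [if_pos h0, if_pos h0, if_pos h0]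
      linarith
    · have hm : (i : ℕ) - 1 < n := by omega
      rw [if_neg h0, natify_pos _ _ hm] at hh
      rw [if_neg h0, if_neg h0, if_neg h0]
      linarith
  · intro h j hj
    have hh := h ⟨j, hj⟩
    rw [flow, flow, prev, prev, sprev] at hh
    rw [natify_pos _ _ hj, natify_pos _ _ hj]
    by_cases h0 : j = 0
    · rw [if_pos h0]
      rw [if_pos (show ((⟨j, hj⟩ : Fin n) : ℕ) = 0 from h0), if_pos (show ((⟨j, hj⟩ : Fin n) : ℕ) = 0 from h0), if_pos (show ((⟨j, hj⟩ : Fin n) : ℕ) = 0 from h0)] at hh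
      linarith
    · have hm : j - 1 < n := by omega
      rw [if_neg h0, natify_pos _ _ hm]
      rw [if_neg (show ¬ ((⟨j, hj⟩ : Fin n) : ℕ) = 0 from h0), if_neg (show ¬ ((⟨j, hj⟩ : Fin n) : ℕ) = 0 from h0), if_neg (show ¬ ((⟨j, hj⟩ : Fin n) : ℕ) = 0 from h0)] at hh
      linarith

noncomputable def sF (E : ℕ → ℝ) (n : ℕ) (i : ℕ) : ℝ :=
  if h : i + 1 < n then stableStamp (E i) (E (i + 1) - sF E n (i + 1)) else 0
termination_by n - i
decreasing_by omega

lemma sF_eq (E : ℕ → ℝ) (n i : ℕ) :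
    sF E n i = if h : i + 1 < n then stableStamp (E i) (E (i + 1) - sF E n (i + 1)) else 0 := by
  rw [sF]

lemma sF_residual (E : ℕ → ℝ) (n i : ℕ) : 0 ≤ sF E n i * (E i - sF E n i) := by
  rw [sF_eq]
  split_ifs with h
  · exact stableStamp_residual _ _
  · simp

/-- The canonical stable stamp components. -/
noncomputable def sStar (γ σ : Fin n → ℝ) : Fin n → ℝ :=
  fun i => sF (natify (fun k => flow σ k - flow γ k)) n (i : ℕ)

/-- The canonical delay components. -/
noncomputable def dStar (γ σ : Fin n → ℝ) : Fin n → ℝ :=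
  fun i => (flow σ i - flow γ i) - sStar γ σ i + sprev (sStar γ σ) i

lemma sStar_lastZero (γ σ : Fin n → ℝ) : LastStampZero (sStar γ σ) := by
  intro i hi
  rw [sStar, sF_eq, dif_neg (by omega)]

lemma sStar_stable (γ σ : Fin n → ℝ) : Stable γ σ (sStar γ σ) := by
  intro i h
  rw [sStar, sF_eq, dif_pos h]
  rw [natify_pos _ _ (show (i : ℕ) < n by omega), Fin.eta, natify_pos _ _ h]
  rfl

lemma sStar_unique (γ σ s : Fin n → ℝ) (hz : LastStampZero s) (hs : Stable γ σ s) :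
    ∀ i : Fin n, s i = sStar γ σ i := by
  suffices H : ∀ k, ∀ i : Fin n, n - (i : ℕ) ≤ k → s i = sStar γ σ i by
    intro i; exact H n i (by omega)
  intro k
  induction k with
  | zero => intro i hk; exact absurd hk (by have := i.isLt; omega)
  | succ k ih =>
      intro i hk
      by_cases h : (i : ℕ) + 1 < n
      · have hih := ih ⟨(i : ℕ) + 1, h⟩ (by simp; omega)
        rw [hs i h, hih]
        exact (sStar_stable γ σ i h).symm
      · have hn : (i : ℕ) + 1 = n := by have := i.isLt; omega
        rw [hz i hn, sStar_lastZero γ σ i hn]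

lemma sStar_coop (γ σ : Fin n → ℝ) : Cooperative (sStar γ σ) (dStar γ σ) := by
  intro i
  have hEi : natify (fun k => flow σ k - flow γ k) (i : ℕ) = flow σ i - flow γ i := by
    rw [natify_pos _ _ i.isLt, Fin.eta]
  have hres : 0 ≤ sStar γ σ i * ((flow σ i - flow γ i) - sStar γ σ i) := by
    rw [← hEi]; exact sF_residual _ n (i : ℕ)
  rw [dStar, sprev]
  by_cases h0 : (i : ℕ) = 0
  · rw [if_pos h0, add_zero]
    exact hres
  · rw [if_neg h0]
    have hm : ((i : ℕ) - 1) + 1 < n := by have := i.isLt; omega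
    have hprev : sStar γ σ ⟨(i : ℕ) - 1, lt_of_le_of_lt (Nat.sub_le _ _) i.isLt⟩
        = stableStamp (natify (fun k => flow σ k - flow γ k) ((i : ℕ) - 1))
            ((flow σ i - flow γ i) - sStar γ σ i) := by
      show sF (natify fun k => flow σ k - flow γ k) n ((i : ℕ) - 1) = _
      rw [sF_eq, dif_pos hm, show (i : ℕ) - 1 + 1 = (i : ℕ) from by omega, hEi]
      rfl
    rw [hprev]
    exact stableStamp_coop _ _ _ hres

lemma sStar_align (γ σ : Fin n → ℝ) : revChronApply (sStar γ σ) (dStar γ σ) γ = σ :=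
  (align_iff γ σ _ _).mpr fun _ => rfl

/-- there is exactly one stable, co-operative, reverse chronological sequence
of mixed moves aligning `γ` to `σ`; its stamp components satisfy the stability recursion
(with `s_n = 0`) and its delay components satisfy `d_i = e_i - s_i + s_{i-1}` (`s₀ = 0`). -/
theorem statement9 (n : ℕ) (γ σ : Fin n → ℝ) :
    (∃! p : (Fin n → ℝ) × (Fin n → ℝ),
      revChronApply p.1 p.2 γ = σ ∧ Cooperative p.1 p.2 ∧
        LastStampZero p.1 ∧ Stable γ σ p.1) ∧
    (∀ s d : Fin n → ℝ,
      revChronApply s d γ = σ → Cooperative s d → LastStampZero s → Stable γ σ s →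
      ∀ i : Fin n, d i = (flow σ i - flow γ i) - s i + sprev s i) := by
  constructor
  · refine ⟨(sStar γ σ, dStar γ σ),
      ⟨sStar_align γ σ, sStar_coop γ σ, sStar_lastZero γ σ, sStar_stable γ σ⟩, ?_⟩
    rintro ⟨s, d⟩ ⟨ha, hc, hz, hst⟩
    have hs : s = sStar γ σ := funext (sStar_unique γ σ s hz hst)
    have hd : d = dStar γ σ := by
      funext i
      rw [(align_iff γ σ s d).mp ha i, hs, dStar]
    rw [Prod.mk.injEq]
    exact ⟨hs, hd⟩
  · intro s d ha _ _ _ i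
    exact (align_iff γ σ s d).mp ha i

end TimedAlign
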